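/- Let k be a field of characteristic 2. In the coordinate chart with coordinates (y₁, w₂, w₃) where y₂ = y₁w₂, y₃ = y₁w₃, the fixed point scheme of the involution σ(y₁,w₂,w₃) = (y₁/(y₁+1), w₂(y₁+1)/(y₁w₂+1), w₃(y₁+1)/(y₁w₃+1)) is cut out by the ideal (y₁², y₁w₂(w₂+1), y₁w₃(w₃+1)) in k[y₁,w₂,w₃] (localized away from denominators). -/
import Mathlib

open MvPolynomial

/-- Char 2, coordinates (y₁,w₂,w₃): the fixed point scheme of the involution
σ(y₁,w₂,w₃) = (y₁/(y₁+1), w₂(y₁+1)/(y₁w₂+1), w₃(y₁+1)/(y₁w₃+1)), with equations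
cleared of denominators, is cut out by the ideal (y₁², y₁w₂(w₂+1), y₁w₃(w₃+1)). -/
theorem stmt_12 (k : Type*) [Field k] [CharP k 2]
    (y w₂ w₃ : MvPolynomial (Fin 3) k)
    (hy : y = X 0) (hw₂ : w₂ = X 1) (hw₃ : w₃ = X 2) :
    Ideal.span {y * (y + 1) - y,
                w₂ * (y * w₂ + 1) - w₂ * (y + 1),
                w₃ * (y * w₃ + 1) - w₃ * (y + 1)}
      = Ideal.span {y ^ 2, y * w₂ * (w₂ + 1), y * w₃ * (w₃ + 1)} := by
  have h2 : (2 : MvPolynomial (Fin 3) k) = 0 := by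
    have := CharP.cast_eq_zero (MvPolynomial (Fin 3) k) 2
    exact_mod_cast this
  have e1 : y * (y + 1) - y = y ^ 2 := by ring
  have e2 : w₂ * (y * w₂ + 1) - w₂ * (y + 1) = y * w₂ * (w₂ + 1) := by
    linear_combination (-(y * w₂)) * h2
  have e3 : w₃ * (y * w₃ + 1) - w₃ * (y + 1) = y * w₃ * (w₃ + 1) := by
    linear_combination (-(y * w₃)) * h2
  rw [e1, e2, e3]
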